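/- arXiv:1109.1728 — 7 statements merged into one kernel-verified Lean document; each statement's English description precedes it below -/
import Mathlib

section
/- Let u : ℝ² → ℝ be a smooth solution of the KdV equation u_t = u_xxx + u·u_x, and let A₁, A₂, A₃ ∈ ℝ. Then v(t,x) := A₁ + A₂·u(t,x) + A₃·(x + t·u(t,x)) satisfies the adjoint equation v_t = v_xxx + u·v_x. Thus the KdV equation is nonlinearly self-adjoint with substitution v = A₁ + A₂ u + A₃ (x + t u). -/
noncomputable def Dt (u : ℝ → ℝ → ℝ) : ℝ → ℝ → ℝ := fun t x => deriv (fun s => u s x) t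
noncomputable def Dx (u : ℝ → ℝ → ℝ) : ℝ → ℝ → ℝ := fun t x => deriv (fun y => u t y) x

def Smooth2 (u : ℝ → ℝ → ℝ) : Prop := ContDiff ℝ (⊤ : ℕ∞) (fun p : ℝ × ℝ => u p.1 p.2)

lemma hasDerivAt_x (u : ℝ → ℝ → ℝ) (hu : Smooth2 u) (t x : ℝ) :
    HasDerivAt (fun y => u t y) (Dx u t x) x := by
  have hd : DifferentiableAt ℝ (fun y => u t y) x := by
    have : (fun y => u t y) = (fun p : ℝ × ℝ => u p.1 p.2) ∘ (fun y => (t, y)) := rfl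
    rw [this]
    exact ((hu.differentiable (by simp)) (t, x)).comp x
      ((differentiableAt_const t).prodMk differentiableAt_id)
  exact hd.hasDerivAt

lemma hasDerivAt_t (u : ℝ → ℝ → ℝ) (hu : Smooth2 u) (t x : ℝ) :
    HasDerivAt (fun s => u s x) (Dt u t x) t := by
  have hd : DifferentiableAt ℝ (fun s => u s x) t := by
    have : (fun s => u s x) = (fun p : ℝ × ℝ => u p.1 p.2) ∘ (fun s => (s, x)) := rfl
    rw [this]
    exact ((hu.differentiable (by simp)) (t, x)).comp t
      (differentiableAt_id.prodMk (differentiableAt_const x))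
  exact hd.hasDerivAt

lemma smooth_Dx (u : ℝ → ℝ → ℝ) (hu : Smooth2 u) : Smooth2 (Dx u) := by
  have h1 : ∀ p : ℝ × ℝ, Dx u p.1 p.2 = fderiv ℝ (fun p : ℝ × ℝ => u p.1 p.2) p ((0 : ℝ), (1 : ℝ)) := by
    intro p
    have hd : HasFDerivAt (fun p : ℝ × ℝ => u p.1 p.2)
        (fderiv ℝ (fun p : ℝ × ℝ => u p.1 p.2) p) p :=
      ((hu.differentiable (by simp)) p).hasFDerivAt
    have hc : HasDerivAt (fun y : ℝ => ((p.1 : ℝ), y)) (((0 : ℝ), (1 : ℝ))) p.2 :=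
      (hasDerivAt_const p.2 p.1).prodMk (hasDerivAt_id p.2)
    exact (hd.comp_hasDerivAt p.2 hc).deriv
  have h2 : (fun p : ℝ × ℝ => Dx u p.1 p.2)
      = fun p => fderiv ℝ (fun p : ℝ × ℝ => u p.1 p.2) p ((0 : ℝ), (1 : ℝ)) :=
    funext fun p => h1 p
  unfold Smooth2
  rw [h2]
  exact (hu.fderiv_right (by simp)).clm_apply contDiff_const
theorem kdv_nonlinearly_self_adjoint (u : ℝ → ℝ → ℝ) (hu : Smooth2 u)
    (hkdv : ∀ t x : ℝ, Dt u t x = Dx (Dx (Dx u)) t x + u t x * Dx u t x)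
    (A₁ A₂ A₃ : ℝ) :
    ∀ t x : ℝ,
      Dt (fun t x => A₁ + A₂ * u t x + A₃ * (x + t * u t x)) t x
        = Dx (Dx (Dx (fun t x => A₁ + A₂ * u t x + A₃ * (x + t * u t x)))) t x
          + u t x * Dx (fun t x => A₁ + A₂ * u t x + A₃ * (x + t * u t x)) t x := by
  have hw1 : Smooth2 (Dx u) := smooth_Dx u hu
  have hw2 : Smooth2 (Dx (Dx u)) := smooth_Dx _ hw1
  have h1 : Dx (fun t x => A₁ + A₂ * u t x + A₃ * (x + t * u t x))
      = fun s y => 0 + A₂ * Dx u s y + A₃ * (1 + s * Dx u s y) := by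
    funext s y
    have hx := hasDerivAt_x u hu s y
    exact (((hasDerivAt_const y A₁).add (hx.const_mul A₂)).add
      (((hasDerivAt_id y).add (hx.const_mul s)).const_mul A₃)).deriv
  have h2 : Dx (fun s y => 0 + A₂ * Dx u s y + A₃ * (1 + s * Dx u s y))
      = fun s y => (0 + A₂ * Dx (Dx u) s y) + A₃ * (0 + s * Dx (Dx u) s y) := by
    funext s y
    have hx := hasDerivAt_x (Dx u) hw1 s y
    exact (((hasDerivAt_const y (0:ℝ)).add (hx.const_mul A₂)).add
      (((hasDerivAt_const y (1:ℝ)).add (hx.const_mul s)).const_mul A₃)).deriv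
  have h3 : Dx (fun s y => (0 + A₂ * Dx (Dx u) s y) + A₃ * (0 + s * Dx (Dx u) s y))
      = fun s y => (0 + A₂ * Dx (Dx (Dx u)) s y) + A₃ * (0 + s * Dx (Dx (Dx u)) s y) := by
    funext s y
    have hx := hasDerivAt_x (Dx (Dx u)) hw2 s y
    exact (((hasDerivAt_const y (0:ℝ)).add (hx.const_mul A₂)).add
      (((hasDerivAt_const y (0:ℝ)).add (hx.const_mul s)).const_mul A₃)).deriv
  intro t x
  have hDt : Dt (fun t x => A₁ + A₂ * u t x + A₃ * (x + t * u t x)) t x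
      = 0 + A₂ * Dt u t x + A₃ * (0 + (1 * u t x + t * Dt u t x)) := by
    have ht := hasDerivAt_t u hu t x
    exact (((hasDerivAt_const t A₁).add (ht.const_mul A₂)).add
      (((hasDerivAt_const t x).add ((hasDerivAt_id t).mul ht)).const_mul A₃)).deriv
  rw [hDt, h1, h2, h3, hkdv t x]
  ring
end

section
/- For every smooth function u : ℝ² → ℝ of (t,x), setting v = e^u one has the pointwise identity v_tt − v_xx − 2 v u_tt − 2 u_t v_t + 2 v u_xx + 2 u_x v_x = − e^u (u_tt − u_xx + u_t² − u_x²). Consequently the nonlinear wave equation u_tt − u_xx + u_t² − u_x² = 0 is quasi self-adjoint with substitution v = e^u. -/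
lemma exp_deriv1 (f : ℝ → ℝ) (hf : ContDiff ℝ (⊤ : ℕ∞) f) (t : ℝ) :
    deriv (fun s => Real.exp (f s)) t = Real.exp (f t) * deriv f t :=
  ((Real.hasDerivAt_exp (f t)).comp t ((hf.differentiable (by simp) t).hasDerivAt)).deriv

lemma exp_deriv2 (f : ℝ → ℝ) (hf : ContDiff ℝ (⊤ : ℕ∞) f) (t : ℝ) :
    deriv (deriv (fun s => Real.exp (f s))) t
      = Real.exp (f t) * ((deriv f t) ^ 2 + deriv (deriv f) t) := by
  have heq : deriv (fun s => Real.exp (f s)) = fun s => Real.exp (f s) * deriv f s :=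
    funext fun s => exp_deriv1 f hf s
  rw [heq]
  have hf2 : ContDiff ℝ (⊤ : ℕ∞) f := hf.of_le (by simp)
  have hdf : Differentiable ℝ (deriv f) :=
    (contDiff_infty_iff_deriv.mp hf2).2.differentiable (by simp)
  have h1 : HasDerivAt (fun s => Real.exp (f s)) (Real.exp (f t) * deriv f t) t :=
    (Real.hasDerivAt_exp (f t)).comp t ((hf.differentiable (by simp) t).hasDerivAt)
  have h2 : HasDerivAt (deriv f) (deriv (deriv f) t) t := (hdf t).hasDerivAt
  rw [(show HasDerivAt (fun s => Real.exp (f s) * deriv f s) _ t from h1.mul h2).deriv]; ring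

theorem wave_quasi_self_adjoint_exp (u : ℝ → ℝ → ℝ) (hu : Smooth2 u) :
    ∀ t x : ℝ,
      Dt (Dt (fun t x => Real.exp (u t x))) t x
        - Dx (Dx (fun t x => Real.exp (u t x))) t x
        - 2 * Real.exp (u t x) * Dt (Dt u) t x
        - 2 * Dt u t x * Dt (fun t x => Real.exp (u t x)) t x
        + 2 * Real.exp (u t x) * Dx (Dx u) t x
        + 2 * Dx u t x * Dx (fun t x => Real.exp (u t x)) t x
      = - Real.exp (u t x)
          * (Dt (Dt u) t x - Dx (Dx u) t x + (Dt u t x) ^ 2 - (Dx u t x) ^ 2) := by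
  intro t x
  have hf : ContDiff ℝ (⊤ : ℕ∞) (fun s => u s x) := hu.comp (contDiff_id.prodMk contDiff_const)
  have hg : ContDiff ℝ (⊤ : ℕ∞) (fun y => u t y) := hu.comp (contDiff_const.prodMk contDiff_id)
  simp only [Dt, Dx]
  rw [exp_deriv2 _ hf t, exp_deriv2 _ hg x, exp_deriv1 _ hf t, exp_deriv1 _ hg x]
  ring
end

section
/- For every smooth function u : ℝ² → ℝ of (t,x) (whether or not it solves the Kompaneets equation), the function v(t,x) = x² satisfies the adjoint Kompaneets equation v_t + x² v_xx − x²(1 + 2u) v_x + 2(x + 2xu − 1) v = 0 identically. -/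
theorem kompaneets_adjoint_solution (u : ℝ → ℝ → ℝ) (hu : Smooth2 u) :
    ∀ t x : ℝ,
      Dt (fun _ x => x ^ 2) t x
        + x ^ 2 * Dx (Dx (fun _ x => x ^ 2)) t x
        - x ^ 2 * (1 + 2 * u t x) * Dx (fun _ x => x ^ 2) t x
        + 2 * (x + 2 * x * u t x - 1) * x ^ 2 = 0 := by
  intro t x
  have h1 : Dt (fun _ x : ℝ => x ^ 2) t x = 0 := by simp [Dt]
  have h2 : Dx (fun _ x : ℝ => x ^ 2) t x = 2 * x := by
    simp [Dx]
  have h2' : Dx (fun _ x : ℝ => x ^ 2) = fun _ x => 2 * x := by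
    funext s y; simp [Dx]
  have h3 : Dx (Dx (fun _ x : ℝ => x ^ 2)) t x = 2 := by
    rw [h2']; simp [Dx]
  rw [h1, h2, h3]; ring
end

section
/- For every smooth function u : ℝ² → ℝ of (t,x), the pointwise identity D_t(u²) + D_x(u² u_x u_t − u_t² − (1/4)u⁴ − (1/4)u⁴ u_x²) = 2(u_t − (1/2)u² u_x)(u + (1/2)u² u_xx + u u_x² − u_xt) holds. In particular, every smooth solution of the short pulse equation u_xt = u + (1/2)u² u_xx + u u_x² satisfies the conservation law D_t(u²) + D_x(u² u_x u_t − u_t² − (1/4)u⁴ − (1/4)u⁴ u_x²) = 0. -/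
section Aux

variable {v : ℝ × ℝ → ℝ}

lemma SPcurve_t (x t : ℝ) : HasDerivAt (fun s : ℝ => (s, x)) ((1 : ℝ), (0 : ℝ)) t :=
  (hasDerivAt_id t).prodMk (hasDerivAt_const t x)

lemma SPcurve_x (t x : ℝ) : HasDerivAt (fun y : ℝ => (t, y)) ((0 : ℝ), (1 : ℝ)) x :=
  (hasDerivAt_const x t).prodMk (hasDerivAt_id x)

lemma SPpdT (hv : ContDiff ℝ (⊤ : ℕ∞) v) (t x : ℝ) :
    HasDerivAt (fun s => v (s, x)) (fderiv ℝ v (t, x) (1, 0)) t :=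
  ((hv.differentiable (by simp) (t, x)).hasFDerivAt).comp_hasDerivAt t (SPcurve_t x t)

lemma SPpdX (hv : ContDiff ℝ (⊤ : ℕ∞) v) (t x : ℝ) :
    HasDerivAt (fun y => v (t, y)) (fderiv ℝ v (t, x) (0, 1)) x :=
  ((hv.differentiable (by simp) (t, x)).hasFDerivAt).comp_hasDerivAt x (SPcurve_x t x)

lemma SPsmooth_pd (hv : ContDiff ℝ (⊤ : ℕ∞) v) (w : ℝ × ℝ) :
    ContDiff ℝ (⊤ : ℕ∞) (fun p => fderiv ℝ v p w) :=
  (hv.fderiv_right (le_of_eq rfl)).clm_apply contDiff_const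

end Aux

theorem short_pulse_conservation_identity (u : ℝ → ℝ → ℝ) (hu : Smooth2 u) :
    (∀ t x : ℝ,
      Dt (fun t x => (u t x) ^ 2) t x
        + Dx (fun t x =>
            (u t x) ^ 2 * Dx u t x * Dt u t x - (Dt u t x) ^ 2
              - (1 / 4) * (u t x) ^ 4 - (1 / 4) * (u t x) ^ 4 * (Dx u t x) ^ 2) t x
      = 2 * (Dt u t x - (1 / 2) * (u t x) ^ 2 * Dx u t x)
          * (u t x + (1 / 2) * (u t x) ^ 2 * Dx (Dx u) t x
              + u t x * (Dx u t x) ^ 2 - Dt (Dx u) t x))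
    ∧ ((∀ t x : ℝ,
          Dt (Dx u) t x
            = u t x + (1 / 2) * (u t x) ^ 2 * Dx (Dx u) t x + u t x * (Dx u t x) ^ 2) →
        ∀ t x : ℝ,
          Dt (fun t x => (u t x) ^ 2) t x
            + Dx (fun t x =>
                (u t x) ^ 2 * Dx u t x * Dt u t x - (Dt u t x) ^ 2
                  - (1 / 4) * (u t x) ^ 4 - (1 / 4) * (u t x) ^ 4 * (Dx u t x) ^ 2) t x
          = 0) := by
  set F : ℝ × ℝ → ℝ := fun p => u p.1 p.2 with hF
  have hFsm : ContDiff ℝ (⊤ : ℕ∞) F := hu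
  -- partial derivative functions as fderiv applications
  have hDt : ∀ t x : ℝ, Dt u t x = fderiv ℝ F (t, x) (1, 0) := by
    intro t x
    exact (SPpdT hFsm t x).deriv
  have hDx : ∀ t x : ℝ, Dx u t x = fderiv ℝ F (t, x) (0, 1) := by
    intro t x
    exact (SPpdX hFsm t x).deriv
  set Gt : ℝ × ℝ → ℝ := fun p => fderiv ℝ F p (1, 0) with hGt
  set Gx : ℝ × ℝ → ℝ := fun p => fderiv ℝ F p (0, 1) with hGx
  have hGtsm : ContDiff ℝ (⊤ : ℕ∞) Gt := SPsmooth_pd hFsm _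
  have hGxsm : ContDiff ℝ (⊤ : ℕ∞) Gx := SPsmooth_pd hFsm _
  -- identification of iterated partials
  have hDxDx : ∀ t x : ℝ, Dx (Dx u) t x = fderiv ℝ Gx (t, x) (0, 1) := by
    intro t x
    have : (fun y => Dx u t y) = fun y => Gx (t, y) := by
      funext y; exact hDx t y
    show deriv (fun y => Dx u t y) x = _
    rw [this]
    exact (SPpdX hGxsm t x).deriv
  have hDtDx : ∀ t x : ℝ, Dt (Dx u) t x = fderiv ℝ Gx (t, x) (1, 0) := by
    intro t x
    have : (fun s => Dx u s x) = fun s => Gx (s, x) := by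
      funext s; exact hDx s x
    show deriv (fun s => Dx u s x) t = _
    rw [this]
    exact (SPpdT hGxsm t x).deriv
  have hDxDt : ∀ t x : ℝ, Dx (Dt u) t x = fderiv ℝ Gt (t, x) (0, 1) := by
    intro t x
    have : (fun y => Dt u t y) = fun y => Gt (t, y) := by
      funext y; exact hDt t y
    show deriv (fun y => Dt u t y) x = _
    rw [this]
    exact (SPpdX hGtsm t x).deriv
  -- symmetry of mixed partials
  have hsymm : ∀ t x : ℝ, Dx (Dt u) t x = Dt (Dx u) t x := by
    intro t x
    have hsym : IsSymmSndFDerivAt ℝ F (t, x) := by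
      apply ContDiffAt.isSymmSndFDerivAt hFsm.contDiffAt
      rw [minSmoothness_of_isRCLikeNormedField]
      exact WithTop.coe_le_coe.mpr le_top
    have h1 : fderiv ℝ Gt (t, x) (0, 1)
        = fderiv ℝ (fderiv ℝ F) (t, x) ((0 : ℝ), (1 : ℝ)) (1, 0) := by
      have hd : DifferentiableAt ℝ (fderiv ℝ F) (t, x) :=
        (hFsm.fderiv_right (m := (⊤ : ℕ∞)) (le_of_eq rfl)).differentiable (by simp) (t, x)
      have := fderiv_clm_apply hd (differentiableAt_const ((1 : ℝ), (0 : ℝ)))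
      simp only [hGt]
      rw [show (fun p => fderiv ℝ F p (1, 0))
            = fun p => (fderiv ℝ F p) ((fun _ : ℝ × ℝ => ((1 : ℝ), (0 : ℝ))) p) from rfl,
          this]
      simp
    have h2 : fderiv ℝ Gx (t, x) (1, 0)
        = fderiv ℝ (fderiv ℝ F) (t, x) ((1 : ℝ), (0 : ℝ)) (0, 1) := by
      have hd : DifferentiableAt ℝ (fderiv ℝ F) (t, x) :=
        (hFsm.fderiv_right (m := (⊤ : ℕ∞)) (le_of_eq rfl)).differentiable (by simp) (t, x)
      have := fderiv_clm_apply hd (differentiableAt_const ((0 : ℝ), (1 : ℝ)))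
      simp only [hGx]
      rw [show (fun p => fderiv ℝ F p (0, 1))
            = fun p => (fderiv ℝ F p) ((fun _ : ℝ × ℝ => ((0 : ℝ), (1 : ℝ))) p) from rfl,
          this]
      simp
    rw [hDxDt, hDtDx, h1, h2]
    exact hsym _ _
  -- derivative facts in x-direction at a fixed (t,x)
  have main : ∀ t x : ℝ,
      Dt (fun t x => (u t x) ^ 2) t x
        + Dx (fun t x =>
            (u t x) ^ 2 * Dx u t x * Dt u t x - (Dt u t x) ^ 2
              - (1 / 4) * (u t x) ^ 4 - (1 / 4) * (u t x) ^ 4 * (Dx u t x) ^ 2) t x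
      = 2 * (Dt u t x - (1 / 2) * (u t x) ^ 2 * Dx u t x)
          * (u t x + (1 / 2) * (u t x) ^ 2 * Dx (Dx u) t x
              + u t x * (Dx u t x) ^ 2 - Dt (Dx u) t x) := by
    intro t x
    -- HasDerivAt for u, Dx u, Dt u in the x-variable
    have hA : HasDerivAt (fun y => u t y) (Dx u t x) x := by
      rw [hDx]; exact SPpdX hFsm t x
    have hB : HasDerivAt (fun y => Dx u t y) (Dx (Dx u) t x) x := by
      rw [hDxDx]
      have : (fun y => Dx u t y) = fun y => Gx (t, y) := by funext y; exact hDx t y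
      rw [this]; exact SPpdX hGxsm t x
    have hC : HasDerivAt (fun y => Dt u t y) (Dt (Dx u) t x) x := by
      rw [← hsymm, hDxDt]
      have : (fun y => Dt u t y) = fun y => Gt (t, y) := by funext y; exact hDt t y
      rw [this]; exact SPpdX hGtsm t x
    -- HasDerivAt for u in t-variable
    have hT : HasDerivAt (fun s => u s x) (Dt u t x) t := by
      rw [hDt]; exact SPpdT hFsm t x
    -- compute Dt (u^2)
    have e1 : Dt (fun t x => (u t x) ^ 2) t x = 2 * u t x * Dt u t x := by
      show deriv (fun s => (u s x) ^ 2) t = _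
      rw [(hT.fun_pow 2).deriv]; ring
    -- compute Dx (flux)
    have hflux : HasDerivAt
        (fun y => (u t y) ^ 2 * Dx u t y * Dt u t y - (Dt u t y) ^ 2
          - (1 / 4) * (u t y) ^ 4 - (1 / 4) * (u t y) ^ 4 * (Dx u t y) ^ 2)
        ((2 * u t x ^ 1 * Dx u t x * Dx u t x + u t x ^ 2 * Dx (Dx u) t x) * Dt u t x
          + (u t x) ^ 2 * Dx u t x * Dt (Dx u) t x
          - 2 * Dt u t x ^ 1 * Dt (Dx u) t x
          - 1 / 4 * (4 * u t x ^ 3 * Dx u t x)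
          - (1 / 4 * (4 * u t x ^ 3 * Dx u t x) * Dx u t x ^ 2
              + 1 / 4 * u t x ^ 4 * (2 * Dx u t x ^ 1 * Dx (Dx u) t x))) x := by
      exact ((((hA.pow 2).mul hB).mul hC).sub (hC.pow 2)).sub
          ((hA.pow 4).const_mul (1 / 4)) |>.sub
          (((hA.pow 4).const_mul (1 / 4)).mul (hB.pow 2))
    have e2 : Dx (fun t x =>
        (u t x) ^ 2 * Dx u t x * Dt u t x - (Dt u t x) ^ 2
          - (1 / 4) * (u t x) ^ 4 - (1 / 4) * (u t x) ^ 4 * (Dx u t x) ^ 2) t x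
        = (2 * u t x ^ 1 * Dx u t x * Dx u t x + u t x ^ 2 * Dx (Dx u) t x) * Dt u t x
          + (u t x) ^ 2 * Dx u t x * Dt (Dx u) t x
          - 2 * Dt u t x ^ 1 * Dt (Dx u) t x
          - 1 / 4 * (4 * u t x ^ 3 * Dx u t x)
          - (1 / 4 * (4 * u t x ^ 3 * Dx u t x) * Dx u t x ^ 2
              + 1 / 4 * u t x ^ 4 * (2 * Dx u t x ^ 1 * Dx (Dx u) t x)) := hflux.deriv
    rw [e1, e2]; ring
  refine ⟨main, fun hsol t x => ?_⟩
  rw [main t x, hsol t x]; ring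
end

section
/- Let v, ρ, p : ℝ² → ℝ be smooth with ρ never zero, and γ ∈ ℝ. With the substitution U = ρv, R = v²/2, P = 1/(γ−1) (γ ≠ 1), the three adjoint gas-dynamics expressions satisfy the identities: (i) −U_t − v U_x − ρ R_x + (1−γ)P p_x − γ p P_x = −ρ(v_t + v v_x + p_x/ρ) − v(ρ_t + v ρ_x + ρ v_x); (ii) −R_t − v R_x − (1/ρ²) U p_x = −v(v_t + v v_x + p_x/ρ); (iii) −P_t − (1/ρ)U_x + (1/ρ²)U ρ_x + (γ−1)P v_x − v P_x = 0 identically. Hence (U,R,P) solves the adjoint system on all solutions of the gas dynamics equations. -/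
lemma Smooth2.diffT {u : ℝ → ℝ → ℝ} (h : Smooth2 u) (t x : ℝ) :
    DifferentiableAt ℝ (fun s => u s x) t := by
  exact ((h.differentiable (by simp)).comp
    (differentiable_id.prodMk (differentiable_const x))).differentiableAt

lemma Smooth2.diffX {u : ℝ → ℝ → ℝ} (h : Smooth2 u) (t x : ℝ) :
    DifferentiableAt ℝ (fun y => u t y) x := by
  exact ((h.differentiable (by simp)).comp
    ((differentiable_const t).prodMk differentiable_id)).differentiableAt

lemma Dt_mul {u w : ℝ → ℝ → ℝ} (hu : Smooth2 u) (hw : Smooth2 w) (t x : ℝ) :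
    Dt (fun t x => u t x * w t x) t x = Dt u t x * w t x + u t x * Dt w t x := by
  simp only [Dt]
  exact deriv_mul (hu.diffT t x) (hw.diffT t x)

lemma Dx_mul {u w : ℝ → ℝ → ℝ} (hu : Smooth2 u) (hw : Smooth2 w) (t x : ℝ) :
    Dx (fun t x => u t x * w t x) t x = Dx u t x * w t x + u t x * Dx w t x := by
  simp only [Dx]
  exact deriv_mul (hu.diffX t x) (hw.diffX t x)

lemma Dt_sq {u : ℝ → ℝ → ℝ} (hu : Smooth2 u) (t x : ℝ) :
    Dt (fun t x => (u t x) ^ 2 / 2) t x = u t x * Dt u t x := by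
  simp only [Dt]
  rw [show (fun s => (u s x) ^ 2 / 2) = (fun s => u s x * u s x * (1/2)) by
    funext s; ring]
  rw [deriv_mul_const ((hu.diffT t x).fun_mul (hu.diffT t x)),
    deriv_fun_mul (hu.diffT t x) (hu.diffT t x)]
  ring

lemma Dx_sq {u : ℝ → ℝ → ℝ} (hu : Smooth2 u) (t x : ℝ) :
    Dx (fun t x => (u t x) ^ 2 / 2) t x = u t x * Dx u t x := by
  simp only [Dx]
  rw [show (fun y => (u t y) ^ 2 / 2) = (fun y => u t y * u t y * (1/2)) by
    funext y; ring]
  rw [deriv_mul_const ((hu.diffX t x).fun_mul (hu.diffX t x)),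
    deriv_fun_mul (hu.diffX t x) (hu.diffX t x)]
  ring

theorem gas_adjoint_substitution (v ρ p : ℝ → ℝ → ℝ)
    (hv : Smooth2 v) (hρ : Smooth2 ρ) (hp : Smooth2 p)
    (hρ0 : ∀ t x : ℝ, ρ t x ≠ 0) (γ : ℝ) (hγ : γ ≠ 1) :
    (∀ t x : ℝ,
      -(Dt (fun t x => ρ t x * v t x) t x)
        - v t x * Dx (fun t x => ρ t x * v t x) t x
        - ρ t x * Dx (fun t x => (v t x) ^ 2 / 2) t x
        + (1 - γ) * (1 / (γ - 1)) * Dx p t x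
        - γ * p t x * Dx (fun _ _ => 1 / (γ - 1)) t x
      = -(ρ t x) * (Dt v t x + v t x * Dx v t x + Dx p t x / ρ t x)
        - v t x * (Dt ρ t x + v t x * Dx ρ t x + ρ t x * Dx v t x))
    ∧ (∀ t x : ℝ,
      -(Dt (fun t x => (v t x) ^ 2 / 2) t x)
        - v t x * Dx (fun t x => (v t x) ^ 2 / 2) t x
        - (1 / (ρ t x) ^ 2) * (ρ t x * v t x) * Dx p t x
      = -(v t x) * (Dt v t x + v t x * Dx v t x + Dx p t x / ρ t x))
    ∧ (∀ t x : ℝ,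
      -(Dt (fun _ _ => 1 / (γ - 1)) t x)
        - (1 / ρ t x) * Dx (fun t x => ρ t x * v t x) t x
        + (1 / (ρ t x) ^ 2) * (ρ t x * v t x) * Dx ρ t x
        + (γ - 1) * (1 / (γ - 1)) * Dx v t x
        - v t x * Dx (fun _ _ => 1 / (γ - 1)) t x
      = 0) := by
  have hγ' : γ - 1 ≠ 0 := sub_ne_zero.mpr hγ
  have hc : ∀ t x : ℝ, Dt (fun _ _ => 1 / (γ - 1)) t x = 0 := by
    intro t x; simp [Dt]
  have hc' : ∀ t x : ℝ, Dx (fun _ _ => 1 / (γ - 1)) t x = 0 := by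
    intro t x; simp [Dx]
  refine ⟨fun t x => ?_, fun t x => ?_, fun t x => ?_⟩
  · rw [Dt_mul hρ hv, Dx_mul hρ hv, Dx_sq hv, hc']
    field_simp [hρ0 t x]
    ring
  · rw [Dt_sq hv, Dx_sq hv]
    field_simp [hρ0 t x]
    ring
  · rw [hc, hc', Dx_mul hρ hv]
    field_simp [hρ0 t x]
    ring
end

section
/- Let a, b, c, k, Q ∈ ℝ with a ≠ 0 and k ≠ 0. On any open set of (t,x) where a x + b > 0 and cos(c − a k t) ≠ 0, the functions ρ = 1/(ax+b), v = k(ax+b)·tan(c − akt), p = k²(ax+b) + Q·cos(c − akt) form an exact solution of the Chaplygin gas equations v_t + v v_x + p_x/ρ = 0, ρ_t + v ρ_x + ρ v_x = 0, p_t + v p_x − p v_x = 0. -/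
theorem chaplygin_tan_solution (a b c k Q : ℝ) (ha : a ≠ 0) (hk : k ≠ 0) :
    ∀ t x : ℝ, a * x + b > 0 → Real.cos (c - a * k * t) ≠ 0 →
      (Dt (fun t x => k * (a * x + b) * Real.tan (c - a * k * t)) t x
          + k * (a * x + b) * Real.tan (c - a * k * t)
              * Dx (fun t x => k * (a * x + b) * Real.tan (c - a * k * t)) t x
          + Dx (fun t x => k ^ 2 * (a * x + b) + Q * Real.cos (c - a * k * t)) t x
              / (1 / (a * x + b)) = 0)
      ∧ (Dt (fun t x => 1 / (a * x + b)) t x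
          + k * (a * x + b) * Real.tan (c - a * k * t)
              * Dx (fun t x => 1 / (a * x + b)) t x
          + (1 / (a * x + b))
              * Dx (fun t x => k * (a * x + b) * Real.tan (c - a * k * t)) t x = 0)
      ∧ (Dt (fun t x => k ^ 2 * (a * x + b) + Q * Real.cos (c - a * k * t)) t x
          + k * (a * x + b) * Real.tan (c - a * k * t)
              * Dx (fun t x => k ^ 2 * (a * x + b) + Q * Real.cos (c - a * k * t)) t x
          - (k ^ 2 * (a * x + b) + Q * Real.cos (c - a * k * t))
              * Dx (fun t x => k * (a * x + b) * Real.tan (c - a * k * t)) t x = 0) := by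
  intro t x hx hcos
  set θ := c - a * k * t with hθdef
  have hne : a * x + b ≠ 0 := ne_of_gt hx
  have hlin : HasDerivAt (fun s : ℝ => c - a * k * s) (-(a * k)) t := by
    simpa using ((hasDerivAt_id t).const_mul (a * k)).const_sub c
  have htan : HasDerivAt (fun s : ℝ => Real.tan (c - a * k * s))
      (1 / Real.cos θ ^ 2 * (-(a * k))) t :=
    by have h := (Real.hasDerivAt_tan hcos).comp t hlin; exact h
  have hDtv : Dt (fun t x => k * (a * x + b) * Real.tan (c - a * k * t)) t x
      = k * (a * x + b) * (1 / Real.cos θ ^ 2 * (-(a * k))) := by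
    simp only [Dt]
    exact (htan.const_mul (k * (a * x + b))).deriv
  have hDxv : Dx (fun t x => k * (a * x + b) * Real.tan (c - a * k * t)) t x
      = k * a * Real.tan θ := by
    simp only [Dx]
    have h : HasDerivAt (fun y : ℝ => k * (a * y + b) * Real.tan θ)
        (k * a * Real.tan θ) x := by
      have : HasDerivAt (fun y : ℝ => a * y + b) a x := by
        simpa using ((hasDerivAt_id x).const_mul a).add_const b
      simpa [mul_comm, mul_assoc, mul_left_comm] using (this.const_mul k).mul_const (Real.tan θ)
    exact h.deriv
  have hDxp : Dx (fun t x => k ^ 2 * (a * x + b) + Q * Real.cos (c - a * k * t)) t x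
      = k ^ 2 * a := by
    simp only [Dx]
    have h : HasDerivAt (fun y : ℝ => k ^ 2 * (a * y + b) + Q * Real.cos θ)
        (k ^ 2 * a) x := by
      have : HasDerivAt (fun y : ℝ => a * y + b) a x := by
        simpa using ((hasDerivAt_id x).const_mul a).add_const b
      simpa using (this.const_mul (k ^ 2)).add_const (Q * Real.cos θ)
    exact h.deriv
  have hDtrho : Dt (fun t x => 1 / (a * x + b)) t x = 0 := by
    simp [Dt]
  have hDxrho : Dx (fun t x => 1 / (a * x + b)) t x = -(a / (a * x + b) ^ 2) := by
    simp only [Dx, one_div]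
    have h : HasDerivAt (fun y : ℝ => (a * y + b)⁻¹) (-(a / (a * x + b) ^ 2)) x := by
      have hlin2 : HasDerivAt (fun y : ℝ => a * y + b) a x := by
        simpa using ((hasDerivAt_id x).const_mul a).add_const b
      simpa [div_eq_mul_inv, mul_comm, Pi.inv_def] using hlin2.inv hne
    exact h.deriv
  have hDtp : Dt (fun t x => k ^ 2 * (a * x + b) + Q * Real.cos (c - a * k * t)) t x
      = Q * (-Real.sin θ * -(a * k)) := by
    simp only [Dt]
    have h : HasDerivAt (fun s : ℝ => k ^ 2 * (a * x + b) + Q * Real.cos (c - a * k * s))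
        (Q * (-Real.sin θ * -(a * k))) t := by
      have hc : HasDerivAt (fun s : ℝ => Real.cos (c - a * k * s)) (-Real.sin θ * -(a * k)) t :=
        by have h := (Real.hasDerivAt_cos θ).comp t hlin; exact h
      simpa using (hc.const_mul Q).const_add (k ^ 2 * (a * x + b))
    exact h.deriv
  rw [hDtv, hDxv, hDxp, hDtrho, hDxrho, hDtp]
  have htaneq : Real.tan θ = Real.sin θ / Real.cos θ := Real.tan_eq_sin_div_cos θ
  have hpy : Real.sin θ ^ 2 = 1 - Real.cos θ ^ 2 := by
    have := Real.sin_sq_add_cos_sq θ; linarith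
  refine ⟨?_, ?_, ?_⟩
  · rw [htaneq]; field_simp
    linear_combination (k ^ 2 * a * b + k ^ 2 * a ^ 2 * x) * hpy
  · rw [htaneq]; field_simp; ring
  · rw [htaneq]; field_simp; ring
end

section
/- Let v, ρ, p, τ : ℝ² → ℝ be smooth with ρ never zero, and suppose τ satisfies τ_x = ρ and τ_t = −vρ. Then the pointwise identity D_t(tρv + τ) + D_x(t(ρv² + p)) = tρ(v_t + v v_x + p_x/ρ) + tv(ρ_t + v ρ_x + ρ v_x) holds. Hence on every solution of the Chaplygin gas equations the vector (tρv + τ, t(ρv² + p)) is conserved. -/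
lemma Smooth2.diff_t {u : ℝ → ℝ → ℝ} (hu : Smooth2 u) (x : ℝ) :
    Differentiable ℝ (fun s => u s x) :=
  (hu.differentiable (by simp)).comp (differentiable_id.prodMk (differentiable_const x))

lemma Smooth2.diff_x {u : ℝ → ℝ → ℝ} (hu : Smooth2 u) (t : ℝ) :
    Differentiable ℝ (fun y => u t y) :=
  (hu.differentiable (by simp)).comp ((differentiable_const t).prodMk differentiable_id)

theorem chaplygin_nonlocal_conservation_tau (v ρ p τ : ℝ → ℝ → ℝ)
    (hv : Smooth2 v) (hρ : Smooth2 ρ) (hp : Smooth2 p) (hτ : Smooth2 τ)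
    (hρ0 : ∀ t x : ℝ, ρ t x ≠ 0)
    (hτx : ∀ t x : ℝ, Dx τ t x = ρ t x)
    (hτt : ∀ t x : ℝ, Dt τ t x = -(v t x * ρ t x)) :
    (∀ t x : ℝ,
      Dt (fun t x => t * ρ t x * v t x + τ t x) t x
        + Dx (fun t x => t * (ρ t x * (v t x) ^ 2 + p t x)) t x
      = t * ρ t x * (Dt v t x + v t x * Dx v t x + Dx p t x / ρ t x)
        + t * v t x * (Dt ρ t x + v t x * Dx ρ t x + ρ t x * Dx v t x))
    ∧ ((∀ t x : ℝ, Dt v t x + v t x * Dx v t x + Dx p t x / ρ t x = 0) →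
       (∀ t x : ℝ, Dt ρ t x + v t x * Dx ρ t x + ρ t x * Dx v t x = 0) →
       (∀ t x : ℝ, Dt p t x + v t x * Dx p t x - p t x * Dx v t x = 0) →
        ∀ t x : ℝ,
          Dt (fun t x => t * ρ t x * v t x + τ t x) t x
            + Dx (fun t x => t * (ρ t x * (v t x) ^ 2 + p t x)) t x = 0) := by
  have key : ∀ t x : ℝ,
      Dt (fun t x => t * ρ t x * v t x + τ t x) t x
        + Dx (fun t x => t * (ρ t x * (v t x) ^ 2 + p t x)) t x
      = t * ρ t x * (Dt v t x + v t x * Dx v t x + Dx p t x / ρ t x)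
        + t * v t x * (Dt ρ t x + v t x * Dx ρ t x + ρ t x * Dx v t x) := by
    intro t x
    have hvt : DifferentiableAt ℝ (fun s => v s x) t := hv.diff_t x t
    have hρt : DifferentiableAt ℝ (fun s => ρ s x) t := hρ.diff_t x t
    have hτt' : DifferentiableAt ℝ (fun s => τ s x) t := hτ.diff_t x t
    have hvx : DifferentiableAt ℝ (fun y => v t y) x := hv.diff_x t x
    have hρx : DifferentiableAt ℝ (fun y => ρ t y) x := hρ.diff_x t x
    have hpx : DifferentiableAt ℝ (fun y => p t y) x := hp.diff_x t x
    have h1 : Dt (fun t x => t * ρ t x * v t x + τ t x) t x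
        = ρ t x * v t x + t * (Dt ρ t x) * v t x + t * ρ t x * (Dt v t x)
          - v t x * ρ t x := by
      show deriv (fun s => s * ρ s x * v s x + τ s x) t = _
      rw [deriv_fun_add ((differentiableAt_fun_id.fun_mul hρt).fun_mul hvt) hτt',
        deriv_fun_mul (differentiableAt_fun_id.fun_mul hρt) hvt,
        deriv_fun_mul differentiableAt_fun_id hρt]
      have := hτt t x
      simp only [Dt] at this
      rw [this]
      simp [Dt]
      ring
    have h2 : Dx (fun t x => t * (ρ t x * (v t x) ^ 2 + p t x)) t x
        = t * ((Dx ρ t x) * (v t x) ^ 2 + ρ t x * (2 * v t x * Dx v t x)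
            + Dx p t x) := by
      show deriv (fun y => t * (ρ t y * (v t y) ^ 2 + p t y)) x = _
      rw [deriv_const_mul (d := fun y => ρ t y * (v t y) ^ 2 + p t y) _ ((hρx.mul (hvx.pow 2)).add hpx),
        deriv_fun_add (hρx.fun_mul (hvx.fun_pow 2)) hpx,
        deriv_fun_mul hρx (hvx.fun_pow 2), deriv_fun_pow hvx 2]
      simp [Dx]
    rw [h1, h2]
    field_simp [hρ0 t x]
    ring
  refine ⟨key, fun e1 e2 _ t x => ?_⟩
  rw [key t x, e1 t x, e2 t x]
  ring
end
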